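/- Let V be a symplectic representation of a compact Lie group G with Hilbert basis θ₁,…,θ_l of the invariant polynomials. Suppose there exist indices i₀ ≠ i₁ and a point x₀ ∈ V such that lim_{x→x₀} {θ_{i₀}, θ_i}(x)/{θ_{i₀}, θ_{i₁}}(x) = 0 for all i ≠ i₁, where {θ_{i₀}, θ_{i₁}} is not identically zero near x₀. If (θ, t) ∈ (V/G) × ℝ^l satisfies Σᵢ tᵢ {θ_j, θ_i}(x) = 0 for all j and all x in a neighborhood where {θ_{i₀},θ_{i₁}} ≠ 0, then t_{i₁} = 0. -/
import Mathlib


/-- Let `V` be a symplectic representation with Hilbert basis `θ₁, …, θ_l` and Poisson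
brackets `{θ_i, θ_j}(x) = ω(X_{θ_i}(x), X_{θ_j}(x))`. Suppose there are indices
`i₀ ≠ i₁` and a point `x₀` in the closure of `D = {x | {θ_{i₀}, θ_{i₁}}(x) ≠ 0}` with
`lim_{x → x₀, x ∈ D} {θ_{i₀}, θ_i}(x) / {θ_{i₀}, θ_{i₁}}(x) = 0` for all `i ≠ i₁`.
If `t ∈ ℝ^l` satisfies `∑ᵢ tᵢ {θ_{i₀}, θ_i}(x) = 0` for all `x ∈ D`, then `t_{i₁} = 0`. -/
theorem bracket_relation_forces_coefficient_zero
    {V : Type*} [NormedAddCommGroup V] [NormedSpace ℝ V] {l : ℕ}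
    (ω : V →ₗ[ℝ] V →ₗ[ℝ] ℝ)
    (θ : Fin l → V → ℝ) (Xθ : Fin l → V → V)
    (hXθ : ∀ (i : Fin l) (x v : V), ω (Xθ i x) v = fderiv ℝ (θ i) x v)
    (br : Fin l → Fin l → V → ℝ)
    (hbr : ∀ (i j : Fin l) (x : V), br i j x = ω (Xθ i x) (Xθ j x))
    (i₀ i₁ : Fin l) (hne : i₀ ≠ i₁)
    (D : Set V) (hD : D = {x : V | br i₀ i₁ x ≠ 0}) (hDne : D.Nonempty)
    (x₀ : V) (hx₀ : x₀ ∈ closure D)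
    (hlim : ∀ i : Fin l, i ≠ i₁ →
      Filter.Tendsto (fun x => br i₀ i x / br i₀ i₁ x) (nhdsWithin x₀ D) (nhds 0))
    (t : Fin l → ℝ)
    (ht : ∀ x ∈ D, ∑ i : Fin l, t i * br i₀ i x = 0) :
    t i₁ = 0 := by
  have hNe : (nhdsWithin x₀ D).NeBot := mem_closure_iff_nhdsWithin_neBot.mp hx₀
  set g : V → ℝ := fun x => -∑ i ∈ Finset.univ.erase i₁, t i * (br i₀ i x / br i₀ i₁ x)
    with hg
  have hg0 : Filter.Tendsto g (nhdsWithin x₀ D) (nhds 0) := by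
    have h := tendsto_finset_sum (Finset.univ.erase i₁)
      (fun i (hi : i ∈ Finset.univ.erase i₁) =>
        ((hlim i (Finset.mem_erase.mp hi).1).const_mul (t i)))
    simp only [mul_zero, Finset.sum_const_zero] at h
    simpa [hg] using h.neg
  have heq : g =ᶠ[nhdsWithin x₀ D] fun _ => t i₁ := by
    filter_upwards [self_mem_nhdsWithin] with x hx
    have hx0 : br i₀ i₁ x ≠ 0 := by rw [hD] at hx; exact hx
    have hsplit : t i₁ * br i₀ i₁ x + ∑ i ∈ Finset.univ.erase i₁, t i * br i₀ i x = 0 :=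
      (Finset.add_sum_erase Finset.univ (fun i => t i * br i₀ i x)
        (Finset.mem_univ i₁)).trans (ht x hx)
    have h2 : g x = (-∑ i ∈ Finset.univ.erase i₁, t i * br i₀ i x) / br i₀ i₁ x := by
      rw [hg, neg_div, Finset.sum_div, neg_inj]
      exact Finset.sum_congr rfl fun i _ => (mul_div_assoc _ _ _).symm
    have h3 : -∑ i ∈ Finset.univ.erase i₁, t i * br i₀ i x = t i₁ * br i₀ i₁ x := by
      linarith
    rw [h2, h3, mul_div_assoc, div_self hx0, mul_one]
  have : Filter.Tendsto (fun _ : V => t i₁) (nhdsWithin x₀ D) (nhds 0) :=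
    hg0.congr' heq
  exact tendsto_nhds_unique tendsto_const_nhds this
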